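/- The map f_0 : (W_{d,r} × D^k, V_{d,r} × S^{k-1}) → (W_{d+k,r}, V_{d+k,r}) defined via an orthogonal Clifford multiplication, (v_0,...,v_{r-1}, x) ↦ (√(1-|x|²)v_0 + e_0x, ..., √(1-|x|²)v_{r-1} + e_{r-1}x), is well-defined: if (v_0,...,v_{r-1}) is an orthonormal r-frame in ℝ^d and |x| = 1 with x ∈ ℝ^k, then the image is an orthonormal r-frame in ℝ^{d+k} = ℝ^d ⊕ ℝ^k. -/

import Mathlib

open RealInnerProductSpace

theorem Orthonormal.toLp_smul_prod {ι E F : Type*} [DecidableEq ι]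
    [NormedAddCommGroup E] [InnerProductSpace ℝ E] [NormedAddCommGroup F] [InnerProductSpace ℝ F]
    {v : ι → E} (hv : Orthonormal ℝ v) {w : ι → F} {a b : ℝ}
    (hw : ∀ i j, ⟪w i, w j⟫ = if i = j then b else 0) (hab : a ^ 2 + b = 1) :
    Orthonormal ℝ (fun i => (WithLp.equiv 2 (E × F)).symm (a • v i, w i)) := by
  rw [orthonormal_iff_ite] at hv ⊢
  intro i j
  have hinner : ⟪(WithLp.equiv 2 (E × F)).symm (a • v i, w i),
      (WithLp.equiv 2 (E × F)).symm (a • v j, w j)⟫ = a ^ 2 * ⟪v i, v j⟫ + ⟪w i, w j⟫ := by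
    rw [WithLp.prod_inner_apply]
    simp only [WithLp.equiv_symm_apply, WithLp.ofLp_toLp, real_inner_smul_left,
      real_inner_smul_right]
    ring
  rw [hinner, hv, hw]
  split_ifs <;> linarith

theorem periodicity_map_well_defined_general
    {r d k : ℕ}
    (μ : (Fin r → ℝ) →ₗ[ℝ] EuclideanSpace ℝ (Fin k) →ₗ[ℝ] EuclideanSpace ℝ (Fin k))
    (horth : ∀ (i j : Fin r) (y : EuclideanSpace ℝ (Fin k)),
      inner ℝ (μ (Pi.single i 1) y) (μ (Pi.single j 1) y)
        = if i = j then (inner ℝ y y : ℝ) else 0)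
    (v : Fin r → EuclideanSpace ℝ (Fin d)) (hv : Orthonormal ℝ v)
    (x : EuclideanSpace ℝ (Fin k)) (hx : ‖x‖ ≤ 1) :
    Orthonormal ℝ (fun i : Fin r =>
      (WithLp.equiv 2 (EuclideanSpace ℝ (Fin d) × EuclideanSpace ℝ (Fin k))).symm
        (Real.sqrt (1 - ‖x‖ ^ 2) • v i, μ (Pi.single i 1) x)) := by
  have hnorm_sq_le : ‖x‖ ^ 2 ≤ 1 := pow_le_one₀ (norm_nonneg x) hx
  refine hv.toLp_smul_prod (horth · · x) ?_
  rw [Real.sq_sqrt (sub_nonneg.mpr hnorm_sq_le), real_inner_self_eq_norm_sq]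
  ring

/-- The periodicity map
`f₀ : (W_{d,r} × D^k, V_{d,r} × S^{k-1}) → (W_{d+k,r}, V_{d+k,r})`,
`(v_0, …, v_{r-1}, x) ↦ (√(1-|x|²)v_0 + e_0x, …, √(1-|x|²)v_{r-1} + e_{r-1}x)`, defined via an
orthogonal Clifford multiplication `ℝ^r × ℝ^k → ℝ^k`, is well-defined: if `(v_0, …, v_{r-1})`
is an orthonormal `r`-frame in `ℝ^d` and `x ∈ ℝ^k` with `|x| ≤ 1`, then the image is an
orthonormal `r`-frame in `ℝ^{d+k} = ℝ^d ⊕ ℝ^k`. -/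
theorem periodicity_map_well_defined
    {r d k : ℕ} (hr : 0 < r)
    (μ : (Fin r → ℝ) →ₗ[ℝ] EuclideanSpace ℝ (Fin k) →ₗ[ℝ] EuclideanSpace ℝ (Fin k))
    (h0 : ∀ y, μ (Pi.single (⟨0, hr⟩ : Fin r) 1) y = y)
    (horth : ∀ (i j : Fin r) (y : EuclideanSpace ℝ (Fin k)),
      inner ℝ (μ (Pi.single i 1) y) (μ (Pi.single j 1) y)
        = if i = j then (inner ℝ y y : ℝ) else 0)
    (v : Fin r → EuclideanSpace ℝ (Fin d)) (hv : Orthonormal ℝ v)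
    (x : EuclideanSpace ℝ (Fin k)) (hx : ‖x‖ ≤ 1) :
    Orthonormal ℝ (fun i : Fin r =>
      (WithLp.equiv 2 (EuclideanSpace ℝ (Fin d) × EuclideanSpace ℝ (Fin k))).symm
        (Real.sqrt (1 - ‖x‖ ^ 2) • v i, μ (Pi.single i 1) x)) :=
  periodicity_map_well_defined_general μ horth v hv x hx
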